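/- Let a < b be reals and g : [a,b] → ℝ be bounded, differentiable, with g' strictly convex. Let λ ∈ (a,b) and σ² with 0 < σ² ≤ (b−λ)(λ−a). Then there exist Borel probability measures μ₋ and μ₊ supported in [a,b] with mean λ and variance σ² such that E_{μ₋}[g(X)] = (σ²·g(a) + (λ−a)²·g(λ + σ²/(λ−a))) / (σ² + (λ−a)²) and E_{μ₊}[g(X)] = (σ²·g(b) + (λ−b)²·g(λ + σ²/(λ−b))) / (σ² + (λ−b)²), and for every Borel probability measure μ supported in [a,b] with mean λ and variance σ² one has E_{μ₋}[g(X)] ≤ E_μ[g(X)] ≤ E_{μ₊}[g(X)]. -/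

import Mathlib

/-!
For a law `μ` on `[a, b]` with mean `λ` and variance `σ²`, the integral of a quadratic polynomial
depends only on `λ` and `σ²`. Put `c = λ + σ² / (λ - a)` and let `q` be the quadratic with
`q a = g a`, `q c = g c`, `q' c = g' c`. The derivative of `g - q` is convex and vanishes at `c`
and, by Rolle, at some `ξ ∈ (a, c)`; so `g - q` increases on `[a, ξ]`, decreases on `[ξ, c]` and
increases on `[c, b]`, and since it vanishes at `a` and `c` it is nonnegative. Hence
`∫ g dμ ≥ ∫ q dμ = ∫ q dμ₋ = ∫ g dμ₋` for the law `μ₋` with mean `λ` and variance `σ²` carried by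
`{a, c}`. The upper bound is symmetric, with a quadratic above `g` touching it at `b` and at
`λ + σ² / (λ - b)`.
-/

open MeasureTheory Set Filter Topology
open scoped BigOperators ENNReal

noncomputable section

/-- The support of a measure: points all of whose open neighborhoods have
positive measure. -/
def msupport {E : Type*} [TopologicalSpace E] [MeasurableSpace E]
    (μ : Measure E) : Set E :=
  {x | ∀ U : Set E, IsOpen U → x ∈ U → μ U ≠ 0}

section DerivConvex

variable {a b : ℝ} {φ φ' : ℝ → ℝ}

theorem continuousOn_Icc_of_hasDerivWithinAt
    (hφ : ∀ x ∈ Icc a b, HasDerivWithinAt φ (φ' x) (Icc a b) x) {u v : ℝ} (hu : a ≤ u)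
    (hv : v ≤ b) : ContinuousOn φ (Icc u v) := fun x hx =>
  (hφ x ⟨hu.trans hx.1, hx.2.trans hv⟩).continuousWithinAt.mono (Icc_subset_Icc hu hv)

theorem hasDerivAt_of_hasDerivWithinAt_Icc
    (hφ : ∀ x ∈ Icc a b, HasDerivWithinAt φ (φ' x) (Icc a b) x) {x : ℝ} (hx : x ∈ Ioo a b) :
    HasDerivAt φ (φ' x) x :=
  (hφ x (Ioo_subset_Icc_self hx)).hasDerivAt (Icc_mem_nhds hx.1 hx.2)

theorem monotoneOn_antitoneOn_monotoneOn_of_convexOn_deriv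
    (hφ : ∀ x ∈ Icc a b, HasDerivWithinAt φ (φ' x) (Icc a b) x)
    (hconv : ConvexOn ℝ (Icc a b) φ') {ξ c : ℝ} (hξ : ξ ∈ Icc a b) (hc : c ∈ Icc a b)
    (hξc : ξ < c) (hφ'ξ : φ' ξ = 0) (hφ'c : φ' c = 0) :
    MonotoneOn φ (Icc a ξ) ∧ AntitoneOn φ (Icc ξ c) ∧ MonotoneOn φ (Icc c b) := by
  have hcont : ∀ {u v}, a ≤ u → v ≤ b → ContinuousOn φ (Icc u v) :=
    continuousOn_Icc_of_hasDerivWithinAt hφ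
  have hderiv : ∀ {u v}, a ≤ u → v ≤ b →
      ∀ x ∈ interior (Icc u v), HasDerivWithinAt φ (φ' x) (interior (Icc u v)) x := by
    intro u v hu hv x hx
    rw [interior_Icc] at hx ⊢
    exact (hasDerivAt_of_hasDerivWithinAt_Icc hφ
      ⟨hu.trans_lt hx.1, hx.2.trans_le hv⟩).hasDerivWithinAt
  refine ⟨monotoneOn_of_hasDerivWithinAt_nonneg (convex_Icc a ξ) (hcont le_rfl hξ.2)
      (hderiv le_rfl hξ.2) fun x hx => ?_,
    antitoneOn_of_hasDerivWithinAt_nonpos (convex_Icc ξ c) (hcont hξ.1 hc.2)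
      (hderiv hξ.1 hc.2) fun x hx => ?_,
    monotoneOn_of_hasDerivWithinAt_nonneg (convex_Icc c b) (hcont hc.1 le_rfl)
      (hderiv hc.1 le_rfl) fun x hx => ?_⟩ <;> rw [interior_Icc] at hx
  · have hxab : x ∈ Icc a b := ⟨hx.1.le, hx.2.le.trans hξ.2⟩
    simpa [hφ'ξ] using hconv.le_left_of_right_le'' hxab hc hx.2.le hξc (by rw [hφ'ξ, hφ'c])
  · simpa [hφ'ξ, hφ'c] using hconv.le_max_of_mem_Icc hξ hc (Ioo_subset_Icc_self hx)
  · have hxab : x ∈ Icc a b := ⟨hc.1.trans hx.1.le, hx.2.le⟩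
    simpa [hφ'c] using hconv.le_right_of_left_le'' hξ hxab hξc hx.1.le (by rw [hφ'ξ, hφ'c])

theorem isMinOn_of_convexOn_deriv
    (hφ : ∀ x ∈ Icc a b, HasDerivWithinAt φ (φ' x) (Icc a b) x)
    (hconv : ConvexOn ℝ (Icc a b) φ') {c : ℝ} (hac : a < c) (hcb : c ≤ b) (hφa : φ a = φ c)
    (hφ'c : φ' c = 0) : IsMinOn φ (Icc a b) c := by
  obtain ⟨ξ, hξ, hφ'ξ⟩ := exists_hasDerivAt_eq_zero hac
    (continuousOn_Icc_of_hasDerivWithinAt hφ le_rfl hcb) hφa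
    fun x hx => hasDerivAt_of_hasDerivWithinAt_Icc hφ ⟨hx.1, hx.2.trans_le hcb⟩
  obtain ⟨hmono, hanti, hmono'⟩ := monotoneOn_antitoneOn_monotoneOn_of_convexOn_deriv hφ hconv
    ⟨hξ.1.le, hξ.2.le.trans hcb⟩ ⟨hac.le, hcb⟩ hξ.2 hφ'ξ hφ'c
  refine isMinOn_iff.2 fun x hx => ?_
  rcases le_total x ξ with hxξ | hξx
  · exact hφa ▸ hmono ⟨le_rfl, hξ.1.le⟩ ⟨hx.1, hxξ⟩ hx.1
  rcases le_total x c with hxc | hcx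
  · exact hanti ⟨hξx, hxc⟩ ⟨hξ.2.le, le_rfl⟩ hxc
  · exact hmono' ⟨le_rfl, hcb⟩ ⟨hcx, hx.2⟩ hcx

theorem isMaxOn_of_convexOn_deriv
    (hφ : ∀ x ∈ Icc a b, HasDerivWithinAt φ (φ' x) (Icc a b) x)
    (hconv : ConvexOn ℝ (Icc a b) φ') {c : ℝ} (hac : a ≤ c) (hcb : c < b) (hφb : φ b = φ c)
    (hφ'c : φ' c = 0) : IsMaxOn φ (Icc a b) c := by
  obtain ⟨ξ, hξ, hφ'ξ⟩ := exists_hasDerivAt_eq_zero hcb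
    (continuousOn_Icc_of_hasDerivWithinAt hφ hac le_rfl) hφb.symm
    fun x hx => hasDerivAt_of_hasDerivWithinAt_Icc hφ ⟨hac.trans_lt hx.1, hx.2⟩
  obtain ⟨hmono, hanti, hmono'⟩ := monotoneOn_antitoneOn_monotoneOn_of_convexOn_deriv hφ hconv
    ⟨hac, hcb.le⟩ ⟨hac.trans hξ.1.le, hξ.2.le⟩ hξ.1 hφ'c hφ'ξ
  refine isMaxOn_iff.2 fun x hx => ?_
  rcases le_total x c with hxc | hcx
  · exact hmono ⟨hx.1, hxc⟩ ⟨hac, le_rfl⟩ hxc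
  rcases le_total x ξ with hxξ | hξx
  · exact hanti ⟨le_rfl, hξ.1.le⟩ ⟨hcx, hxξ⟩ hcx
  · exact hφb ▸ hmono' ⟨hξx, hx.2⟩ ⟨hξ.2.le, le_rfl⟩ hx.2

end DerivConvex

theorem ConvexOn.sub_const_add_mul {s : Set ℝ} {f : ℝ → ℝ} (hf : ConvexOn ℝ s f) (β κ : ℝ) :
    ConvexOn ℝ s fun x => f x - (β + κ * x) :=
  hf.sub ((concaveOn_const β hf.1).add (LinearMap.concaveOn (LinearMap.mulLeft ℝ κ) hf.1))

theorem hasDerivAt_quadratic (α β γ x : ℝ) :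
    HasDerivAt (fun x => α + β * x + γ * x ^ 2) (β + 2 * γ * x) x := by
  refine ((((hasDerivAt_id x).const_mul β).const_add α).add
    ((hasDerivAt_pow 2 x).const_mul γ)).congr_deriv ?_
  simp only [Nat.cast_ofNat]; ring

theorem exists_quadratic_interpolation {e c : ℝ} (hec : e ≠ c) (y₀ y₁ d : ℝ) :
    ∃ α β γ : ℝ, α + β * e + γ * e ^ 2 = y₀ ∧ α + β * c + γ * c ^ 2 = y₁ ∧
      β + 2 * γ * c = d := by
  have hce : c - e ≠ 0 := sub_ne_zero.2 hec.symm
  set m := (y₁ - y₀) / (c - e)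
  set γ := (d - m) / (c - e)
  have hm : m * (c - e) = y₁ - y₀ := div_mul_cancel₀ _ hce
  have hγ : γ * (c - e) = d - m := div_mul_cancel₀ _ hce
  refine ⟨y₀ - (m - γ * (e + c)) * e - γ * e ^ 2, m - γ * (e + c), γ, by ring, ?_, ?_⟩
  · linear_combination hm
  · linear_combination hγ

section QuadraticBounds

variable {a b c : ℝ} {g g' : ℝ → ℝ}

theorem exists_quadratic_le_of_convexOn_deriv
    (hg : ∀ x ∈ Icc a b, HasDerivWithinAt g (g' x) (Icc a b) x)
    (hconv : ConvexOn ℝ (Icc a b) g') (hac : a < c) (hcb : c ≤ b) :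
    ∃ α β γ : ℝ, α + β * a + γ * a ^ 2 = g a ∧ α + β * c + γ * c ^ 2 = g c ∧
      ∀ x ∈ Icc a b, α + β * x + γ * x ^ 2 ≤ g x := by
  obtain ⟨α, β, γ, ha, hc, hc'⟩ := exists_quadratic_interpolation hac.ne (g a) (g c) (g' c)
  have hmin := isMinOn_of_convexOn_deriv (φ := fun x => g x - (α + β * x + γ * x ^ 2))
    (fun x hx => (hg x hx).sub (hasDerivAt_quadratic α β γ x).hasDerivWithinAt)
    (hconv.sub_const_add_mul β (2 * γ)) hac hcb (by simp only [ha, hc, sub_self])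
    (by rw [hc', sub_self])
  refine ⟨α, β, γ, ha, hc, fun x hx => ?_⟩
  have := isMinOn_iff.1 hmin x hx
  simp only [hc, sub_self] at this
  linarith

theorem exists_le_quadratic_of_convexOn_deriv
    (hg : ∀ x ∈ Icc a b, HasDerivWithinAt g (g' x) (Icc a b) x)
    (hconv : ConvexOn ℝ (Icc a b) g') (hac : a ≤ c) (hcb : c < b) :
    ∃ α β γ : ℝ, α + β * b + γ * b ^ 2 = g b ∧ α + β * c + γ * c ^ 2 = g c ∧
      ∀ x ∈ Icc a b, g x ≤ α + β * x + γ * x ^ 2 := by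
  obtain ⟨α, β, γ, hb, hc, hc'⟩ := exists_quadratic_interpolation hcb.ne' (g b) (g c) (g' c)
  have hmax := isMaxOn_of_convexOn_deriv (φ := fun x => g x - (α + β * x + γ * x ^ 2))
    (fun x hx => (hg x hx).sub (hasDerivAt_quadratic α β γ x).hasDerivWithinAt)
    (hconv.sub_const_add_mul β (2 * γ)) hac hcb (by simp only [hb, hc, sub_self])
    (by rw [hc', sub_self])
  refine ⟨α, β, γ, hb, hc, fun x hx => ?_⟩
  have := isMaxOn_iff.1 hmax x hx
  simp only [hc, sub_self] at this
  linarith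

end QuadraticBounds

theorem msupport_eq_support {E : Type*} [TopologicalSpace E] [MeasurableSpace E]
    (μ : Measure E) : msupport μ = μ.support := by
  ext x
  simp only [msupport, Measure.support_eq_forall_isOpen, mem_ofPred_eq, pos_iff_ne_zero]
  exact forall_congr' fun U => Imp.swap

def twoPoint (p u v : ℝ) : Measure ℝ :=
  ENNReal.ofReal p • Measure.dirac u + ENNReal.ofReal (1 - p) • Measure.dirac v

section TwoPoint

variable {p : ℝ}

theorem isProbabilityMeasure_twoPoint (hp : p ∈ Icc 0 1) (u v : ℝ) :
    IsProbabilityMeasure (twoPoint p u v) :=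
  ⟨by simp [twoPoint, ← ENNReal.ofReal_add hp.1 (sub_nonneg.2 hp.2)]⟩

theorem integrable_twoPoint (p u v : ℝ) (f : ℝ → ℝ) : Integrable f (twoPoint p u v) :=
  ((integrable_dirac enorm_lt_top).smul_measure ENNReal.ofReal_ne_top).add_measure
    ((integrable_dirac enorm_lt_top).smul_measure ENNReal.ofReal_ne_top)

theorem integral_twoPoint (hp : p ∈ Icc 0 1) (u v : ℝ) (f : ℝ → ℝ) :
    ∫ x, f x ∂twoPoint p u v = p * f u + (1 - p) * f v := by
  rw [twoPoint, integral_add_measure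
      ((integrable_dirac enorm_lt_top).smul_measure ENNReal.ofReal_ne_top)
      ((integrable_dirac enorm_lt_top).smul_measure ENNReal.ofReal_ne_top),
    integral_smul_measure, integral_smul_measure, integral_dirac, integral_dirac,
    ENNReal.toReal_ofReal hp.1, ENNReal.toReal_ofReal (sub_nonneg.2 hp.2), smul_eq_mul,
    smul_eq_mul]

theorem msupport_twoPoint_subset {s : Set ℝ} (hs : IsClosed s) (p : ℝ) {u v : ℝ} (hu : u ∈ s)
    (hv : v ∈ s) : msupport (twoPoint p u v) ⊆ s := by
  rw [msupport_eq_support]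
  refine Measure.support_subset_of_isClosed hs (mem_ae_iff.2 ?_)
  simp [twoPoint, Measure.dirac_apply' _ hs.measurableSet.compl, hu, hv]

end TwoPoint

def HasMeanVarOn (s : Set ℝ) (m v : ℝ) (μ : Measure ℝ) : Prop :=
  IsProbabilityMeasure μ ∧ msupport μ ⊆ s ∧
    Integrable (fun x => x) μ ∧ (∫ x, x ∂μ) = m ∧
    Integrable (fun x => x ^ 2) μ ∧ (∫ x, x ^ 2 ∂μ) - m ^ 2 = v

namespace HasMeanVarOn

variable {s : Set ℝ} {m v : ℝ} {μ : Measure ℝ}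

theorem ae_mem (h : HasMeanVarOn s m v μ) : ∀ᵐ x ∂μ, x ∈ s :=
  mem_of_superset Measure.support_mem_ae (msupport_eq_support μ ▸ h.2.1)

theorem integrable_of_continuousOn (h : HasMeanVarOn s m v μ) (hs : IsCompact s) {f : ℝ → ℝ}
    (hf : ContinuousOn f s) : Integrable f μ := by
  have := h.1
  rw [← Measure.restrict_eq_self_of_ae_mem h.ae_mem]
  exact hf.integrableOn_compact hs

theorem integral_quadratic (h : HasMeanVarOn s m v μ) (α β γ : ℝ) :
    ∫ x, α + β * x + γ * x ^ 2 ∂μ = α + β * m + γ * (v + m ^ 2) := by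
  obtain ⟨hprob, -, h₁, hm, h₂, hv⟩ := h
  have h₀₁ : Integrable (fun x => α + β * x) μ := (integrable_const α).add (h₁.const_mul β)
  rw [integral_add h₀₁ (h₂.const_mul γ), integral_add (integrable_const α) (h₁.const_mul β),
    integral_const, integral_const_mul, integral_const_mul, hm, ← hv]
  simp

end HasMeanVarOn

def extremalLaw (e m v : ℝ) : Measure ℝ :=
  twoPoint (v / (v + (m - e) ^ 2)) e (m + v / (m - e))

section ExtremalLaw

variable {a b e m v : ℝ}

theorem div_add_sq_mem_Icc (hv : 0 ≤ v) (d : ℝ) : v / (v + d ^ 2) ∈ Icc 0 1 :=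
  ⟨by positivity, div_le_one_of_le₀ (le_add_of_nonneg_right (sq_nonneg d)) (by positivity)⟩

theorem integral_extremalLaw (hv : 0 ≤ v) (hme : m ≠ e) (f : ℝ → ℝ) :
    ∫ x, f x ∂extremalLaw e m v =
      (v * f e + (m - e) ^ 2 * f (m + v / (m - e))) / (v + (m - e) ^ 2) := by
  have hd : m - e ≠ 0 := sub_ne_zero.2 hme
  have hD : v + (m - e) ^ 2 ≠ 0 := by positivity
  rw [extremalLaw, integral_twoPoint (div_add_sq_mem_Icc hv _)]
  field_simp
  ring

theorem hasMeanVarOn_extremalLaw {s : Set ℝ} (hs : IsClosed s) (hv : 0 ≤ v) (hme : m ≠ e)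
    (he : e ∈ s) (hc : m + v / (m - e) ∈ s) : HasMeanVarOn s m v (extremalLaw e m v) := by
  have hd : m - e ≠ 0 := sub_ne_zero.2 hme
  have hD : v + (m - e) ^ 2 ≠ 0 := by positivity
  refine ⟨isProbabilityMeasure_twoPoint (div_add_sq_mem_Icc hv _) _ _,
    msupport_twoPoint_subset hs _ he hc, integrable_twoPoint _ _ _ _, ?_,
    integrable_twoPoint _ _ _ _, ?_⟩ <;>
  · rw [integral_extremalLaw hv hme]
    field_simp
    ring

theorem add_div_sub_left_mem_Ioc (hm : m ∈ Ioo a b) (hv : 0 < v)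
    (hvb : v ≤ (b - m) * (m - a)) : m + v / (m - a) ∈ Ioc a b := by
  have hma : 0 < m - a := sub_pos.2 hm.1
  have h₀ : 0 < v / (m - a) := div_pos hv hma
  have h₁ : v / (m - a) ≤ b - m := (div_le_iff₀ hma).2 hvb
  constructor <;> linarith

theorem add_div_sub_right_mem_Ico (hm : m ∈ Ioo a b) (hv : 0 < v)
    (hvb : v ≤ (b - m) * (m - a)) : m + v / (m - b) ∈ Ico a b := by
  have hmb : m - b < 0 := sub_neg.2 hm.2
  have h₀ : v / (m - b) < 0 := div_neg_of_pos_of_neg hv hmb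
  have h₁ : a - m ≤ v / (m - b) := (le_div_iff_of_neg hmb).2 (by linarith)
  constructor <;> linarith

theorem hasMeanVarOn_extremalLaw_left (hm : m ∈ Ioo a b) (hv : 0 < v)
    (hvb : v ≤ (b - m) * (m - a)) : HasMeanVarOn (Icc a b) m v (extremalLaw a m v) :=
  hasMeanVarOn_extremalLaw isClosed_Icc hv.le hm.1.ne' (left_mem_Icc.2 (hm.1.trans hm.2).le)
    (Ioc_subset_Icc_self (add_div_sub_left_mem_Ioc hm hv hvb))

theorem hasMeanVarOn_extremalLaw_right (hm : m ∈ Ioo a b) (hv : 0 < v)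
    (hvb : v ≤ (b - m) * (m - a)) : HasMeanVarOn (Icc a b) m v (extremalLaw b m v) :=
  hasMeanVarOn_extremalLaw isClosed_Icc hv.le hm.2.ne (right_mem_Icc.2 (hm.1.trans hm.2).le)
    (Ico_subset_Icc_self (add_div_sub_right_mem_Ico hm hv hvb))

end ExtremalLaw

section ExtremalBounds

variable {a b m v : ℝ} {g g' : ℝ → ℝ} {μ : Measure ℝ}

theorem integral_extremalLaw_left_le (hg : ∀ x ∈ Icc a b, HasDerivWithinAt g (g' x) (Icc a b) x)
    (hconv : ConvexOn ℝ (Icc a b) g') (hm : m ∈ Ioo a b) (hv : 0 < v)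
    (hvb : v ≤ (b - m) * (m - a)) (hμ : HasMeanVarOn (Icc a b) m v μ) :
    ∫ x, g x ∂extremalLaw a m v ≤ ∫ x, g x ∂μ := by
  have hc := add_div_sub_left_mem_Ioc hm hv hvb
  obtain ⟨α, β, γ, hqa, hqc, hqg⟩ := exists_quadratic_le_of_convexOn_deriv hg hconv hc.1 hc.2
  calc ∫ x, g x ∂extremalLaw a m v = ∫ x, α + β * x + γ * x ^ 2 ∂extremalLaw a m v := by
        rw [integral_extremalLaw hv.le hm.1.ne', integral_extremalLaw hv.le hm.1.ne', hqa, hqc]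
    _ = ∫ x, α + β * x + γ * x ^ 2 ∂μ := by
        rw [(hasMeanVarOn_extremalLaw_left hm hv hvb).integral_quadratic,
          hμ.integral_quadratic]
    _ ≤ ∫ x, g x ∂μ :=
        integral_mono_ae (hμ.integrable_of_continuousOn isCompact_Icc (by fun_prop))
          (hμ.integrable_of_continuousOn isCompact_Icc
            (continuousOn_Icc_of_hasDerivWithinAt hg le_rfl le_rfl))
          (hμ.ae_mem.mono hqg)

theorem le_integral_extremalLaw_right (hg : ∀ x ∈ Icc a b, HasDerivWithinAt g (g' x) (Icc a b) x)
    (hconv : ConvexOn ℝ (Icc a b) g') (hm : m ∈ Ioo a b) (hv : 0 < v)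
    (hvb : v ≤ (b - m) * (m - a)) (hμ : HasMeanVarOn (Icc a b) m v μ) :
    ∫ x, g x ∂μ ≤ ∫ x, g x ∂extremalLaw b m v := by
  have hc := add_div_sub_right_mem_Ico hm hv hvb
  obtain ⟨α, β, γ, hqb, hqc, hgq⟩ := exists_le_quadratic_of_convexOn_deriv hg hconv hc.1 hc.2
  calc ∫ x, g x ∂μ ≤ ∫ x, α + β * x + γ * x ^ 2 ∂μ :=
        integral_mono_ae (hμ.integrable_of_continuousOn isCompact_Icc
            (continuousOn_Icc_of_hasDerivWithinAt hg le_rfl le_rfl))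
          (hμ.integrable_of_continuousOn isCompact_Icc (by fun_prop))
          (hμ.ae_mem.mono hgq)
    _ = ∫ x, α + β * x + γ * x ^ 2 ∂extremalLaw b m v := by
        rw [(hasMeanVarOn_extremalLaw_right hm hv hvb).integral_quadratic,
          hμ.integral_quadratic]
    _ = ∫ x, g x ∂extremalLaw b m v := by
        rw [integral_extremalLaw hv.le hm.2.ne, integral_extremalLaw hv.le hm.2.ne, hqb, hqc]

end ExtremalBounds

theorem sharp_bounds_strict_convex_deriv_general (a b : ℝ)
    (g g' : ℝ → ℝ)
    (hdiff : ∀ x ∈ Icc a b, HasDerivWithinAt g (g' x) (Icc a b) x)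
    (hconv : StrictConvexOn ℝ (Icc a b) g')
    (lam σ2 : ℝ) (hlam : lam ∈ Ioo a b) (hσ : 0 < σ2)
    (hσ' : σ2 ≤ (b - lam) * (lam - a)) :
    ∃ μm μp : Measure ℝ,
      (IsProbabilityMeasure μm ∧ msupport μm ⊆ Icc a b ∧
        Integrable (fun x => x) μm ∧ (∫ x, x ∂μm) = lam ∧
        Integrable (fun x => x ^ 2) μm ∧ (∫ x, x ^ 2 ∂μm) - lam ^ 2 = σ2) ∧
      (IsProbabilityMeasure μp ∧ msupport μp ⊆ Icc a b ∧
        Integrable (fun x => x) μp ∧ (∫ x, x ∂μp) = lam ∧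
        Integrable (fun x => x ^ 2) μp ∧ (∫ x, x ^ 2 ∂μp) - lam ^ 2 = σ2) ∧
      (∫ x, g x ∂μm) =
        (σ2 * g a + (lam - a) ^ 2 * g (lam + σ2 / (lam - a))) /
          (σ2 + (lam - a) ^ 2) ∧
      (∫ x, g x ∂μp) =
        (σ2 * g b + (lam - b) ^ 2 * g (lam + σ2 / (lam - b))) /
          (σ2 + (lam - b) ^ 2) ∧
      ∀ μ : Measure ℝ, IsProbabilityMeasure μ → msupport μ ⊆ Icc a b →
        Integrable (fun x => x) μ → (∫ x, x ∂μ) = lam →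
        Integrable (fun x => x ^ 2) μ → (∫ x, x ^ 2 ∂μ) - lam ^ 2 = σ2 →
        (∫ x, g x ∂μm) ≤ (∫ x, g x ∂μ) ∧ (∫ x, g x ∂μ) ≤ (∫ x, g x ∂μp) := by
  refine ⟨extremalLaw a lam σ2, extremalLaw b lam σ2,
    hasMeanVarOn_extremalLaw_left hlam hσ hσ', hasMeanVarOn_extremalLaw_right hlam hσ hσ',
    integral_extremalLaw hσ.le hlam.1.ne' g, integral_extremalLaw hσ.le hlam.2.ne g,
    fun μ hprob hsupp h₁ hmean h₂ hvar => ?_⟩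
  have hμ : HasMeanVarOn (Icc a b) lam σ2 μ := ⟨hprob, hsupp, h₁, hmean, h₂, hvar⟩
  exact ⟨integral_extremalLaw_left_le hdiff hconv.convexOn hlam hσ hσ' hμ,
    le_integral_extremalLaw_right hdiff hconv.convexOn hlam hσ hσ' hμ⟩

/-- sharp bounds for `E[g(X)]` given mean and variance, when `g'`
is strictly convex on `[a,b]`. -/
theorem sharp_bounds_strict_convex_deriv (a b : ℝ) (hab : a < b)
    (g g' : ℝ → ℝ) (hgm : Measurable g)
    (hbdd : ∃ C : ℝ, ∀ x ∈ Icc a b, |g x| ≤ C)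
    (hdiff : ∀ x ∈ Icc a b, HasDerivWithinAt g (g' x) (Icc a b) x)
    (hconv : StrictConvexOn ℝ (Icc a b) g')
    (lam σ2 : ℝ) (hlam : lam ∈ Ioo a b) (hσ : 0 < σ2)
    (hσ' : σ2 ≤ (b - lam) * (lam - a)) :
    ∃ μm μp : Measure ℝ,
      (IsProbabilityMeasure μm ∧ msupport μm ⊆ Icc a b ∧
        Integrable (fun x => x) μm ∧ (∫ x, x ∂μm) = lam ∧
        Integrable (fun x => x ^ 2) μm ∧ (∫ x, x ^ 2 ∂μm) - lam ^ 2 = σ2) ∧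
      (IsProbabilityMeasure μp ∧ msupport μp ⊆ Icc a b ∧
        Integrable (fun x => x) μp ∧ (∫ x, x ∂μp) = lam ∧
        Integrable (fun x => x ^ 2) μp ∧ (∫ x, x ^ 2 ∂μp) - lam ^ 2 = σ2) ∧
      (∫ x, g x ∂μm) =
        (σ2 * g a + (lam - a) ^ 2 * g (lam + σ2 / (lam - a))) /
          (σ2 + (lam - a) ^ 2) ∧
      (∫ x, g x ∂μp) =
        (σ2 * g b + (lam - b) ^ 2 * g (lam + σ2 / (lam - b))) /
          (σ2 + (lam - b) ^ 2) ∧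
      ∀ μ : Measure ℝ, IsProbabilityMeasure μ → msupport μ ⊆ Icc a b →
        Integrable (fun x => x) μ → (∫ x, x ∂μ) = lam →
        Integrable (fun x => x ^ 2) μ → (∫ x, x ^ 2 ∂μ) - lam ^ 2 = σ2 →
        (∫ x, g x ∂μm) ≤ (∫ x, g x ∂μ) ∧ (∫ x, g x ∂μ) ≤ (∫ x, g x ∂μp) :=
  sharp_bounds_strict_convex_deriv_general a b g g' hdiff hconv lam σ2 hlam hσ hσ'
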